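/- Let a, b, c, d ∈ R = ℂ[s,t,u] be homogeneous of degree n ≥ 1 with gcd(a,b,c,d) = 1, let I = ⟨a,b,c,d⟩, and suppose Syz(a,b,c,d) is a free R-module with a basis of homogeneous syzygies of degrees μ₁, μ₂, μ₃ (so μ₁ + μ₂ + μ₃ = n). Then there exists D such that for all d ≥ D, the ℂ-dimension of the degree-d graded piece of R/I (i.e., dim R_d − dim I_d, where I_d = I ∩ R_d) equals (n² + μ₁² + μ₂² + μ₃²)/2. -/

import Mathlib

open MvPolynomial

/-- The syzygy module `Syz(a,b,c,d) = {(A,B,C,D) ∈ R⁴ : Aa + Bb + Cc + Dd = 0}`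
as an `R`-submodule of `R⁴`, `R = ℂ[s,t,u]`. -/
noncomputable def syzygyModule (a b c d : MvPolynomial (Fin 3) ℂ) :
    Submodule (MvPolynomial (Fin 3) ℂ) (Fin 4 → MvPolynomial (Fin 3) ℂ) where
  carrier := {A | A 0 * a + A 1 * b + A 2 * c + A 3 * d = 0}
  add_mem' := by
    intro A B hA hB
    simp only [Set.mem_setOf_eq, Pi.add_apply] at *
    linear_combination hA + hB
  zero_mem' := by simp
  smul_mem' := by
    intro r A hA
    simp only [Set.mem_setOf_eq, Pi.smul_apply, smul_eq_mul] at *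
    linear_combination r * hA

/-! ### Auxiliary results: dimension of the space of homogeneous polynomials -/

noncomputable def degEquivSym (m : ℕ) :
    Sym (Fin 3) m ≃ ↥{d : Fin 3 →₀ ℕ | Finsupp.degree d = m} :=
  Multiset.toFinsupp.toEquiv.subtypeEquiv (fun s => by
    have h : Finsupp.degree (Multiset.toFinsupp s) = Multiset.card s := by
      have := Multiset.toFinsupp_sum_eq s
      exact this
    simp only [AddEquiv.toEquiv_eq_coe, EquivLike.coe_coe, Set.mem_setOf_eq]
    rw [h])

noncomputable instance fintypeDeg (m : ℕ) : Fintype ↥{d : Fin 3 →₀ ℕ | Finsupp.degree d = m} :=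
  Fintype.ofEquiv _ (degEquivSym m)

lemma card_deg (m : ℕ) :
    Fintype.card ↥{d : Fin 3 →₀ ℕ | Finsupp.degree d = m} = (m+1)*(m+2)/2 := by
  rw [← Fintype.card_congr (degEquivSym m)]
  rw [Sym.card_sym_eq_choose]
  have h1 : Fintype.card (Fin 3) + m - 1 = m + 2 := by simp; omega
  rw [h1]
  have h2 : (m+2).choose m = (m+2).choose 2 := by
    have := Nat.choose_symm (n := m+2) (k := 2) (by omega)
    simpa using this
  rw [h2, Nat.choose_two_right, show m+2-1 = m+1 from rfl, Nat.mul_comm]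

noncomputable instance fdS (m : ℕ) : FiniteDimensional ℂ (homogeneousSubmodule (Fin 3) ℂ m) := by
  rw [homogeneousSubmodule_eq_finsupp_supported]
  exact Module.Finite.of_basis (basisRestrictSupport ℂ {d | Finsupp.degree d = m})

lemma finrank_S (m : ℕ) :
    Module.finrank ℂ (homogeneousSubmodule (Fin 3) ℂ m) = (m+1)*(m+2)/2 := by
  have h : Module.finrank ℂ (restrictSupport ℂ {d : Fin 3 →₀ ℕ | Finsupp.degree d = m})
      = Fintype.card ↥{d : Fin 3 →₀ ℕ | Finsupp.degree d = m} :=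
    Module.finrank_eq_card_basis (basisRestrictSupport ℂ _)
  rw [homogeneousSubmodule_eq_finsupp_supported]
  exact h.trans (card_deg m)

/-! ### Auxiliary results: homogeneous components and spans -/

lemma hc_mul' {q : MvPolynomial (Fin 3) ℂ} {m k : ℕ} (hq : q.IsHomogeneous m)
    (h : MvPolynomial (Fin 3) ℂ) (hmk : m ≤ k) :
    homogeneousComponent k (h * q) = homogeneousComponent (k - m) h * q := by
  conv_lhs => rw [← sum_homogeneousComponent h]
  rw [Finset.sum_mul, map_sum]
  rw [Finset.sum_congr rfl (fun i _ => homogeneousComponent_of_mem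
    ((mem_homogeneousSubmodule _ _).2 ((homogeneousComponent_isHomogeneous i h).mul hq)))]
  have hcond : ∀ i : ℕ, (k = i + m) ↔ (i = k - m) := fun i => by omega
  simp_rw [hcond]
  rw [Finset.sum_ite_eq' (Finset.range (h.totalDegree + 1)) (k - m)
    (fun i => homogeneousComponent i h * q)]
  split_ifs with hmem
  · rfl
  · rw [homogeneousComponent_eq_zero, zero_mul]
    simp only [Finset.mem_range] at hmem
    omega

lemma mem_span_four' {x a b c d : MvPolynomial (Fin 3) ℂ} :
    x ∈ Ideal.span {a, b, c, d} ↔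
      ∃ A B C D : MvPolynomial (Fin 3) ℂ, x = A * a + B * b + C * c + D * d := by
  constructor
  · intro hx
    rw [Ideal.mem_span_insert] at hx
    obtain ⟨A, z1, hz1, rfl⟩ := hx
    rw [Ideal.mem_span_insert] at hz1
    obtain ⟨B, z2, hz2, rfl⟩ := hz1
    rw [Ideal.mem_span_insert] at hz2
    obtain ⟨C, z3, hz3, rfl⟩ := hz2
    rw [Ideal.mem_span_singleton'] at hz3
    obtain ⟨D, rfl⟩ := hz3
    exact ⟨A, B, C, D, by ring⟩
  · rintro ⟨A, B, C, D, rfl⟩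
    have ha : a ∈ Ideal.span {a, b, c, d} := Ideal.subset_span (by simp)
    have hb : b ∈ Ideal.span {a, b, c, d} := Ideal.subset_span (by simp)
    have hc : c ∈ Ideal.span {a, b, c, d} := Ideal.subset_span (by simp)
    have hd : d ∈ Ideal.span {a, b, c, d} := Ideal.subset_span (by simp)
    exact Ideal.add_mem _ (Ideal.add_mem _ (Ideal.add_mem _
      (Ideal.mul_mem_left _ _ ha) (Ideal.mul_mem_left _ _ hb))
      (Ideal.mul_mem_left _ _ hc)) (Ideal.mul_mem_left _ _ hd)

/-! ### The main dimension count -/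

lemma dim_inf (n k : ℕ) (hk : n ≤ k)
    (a b c d : MvPolynomial (Fin 3) ℂ)
    (ha : a.IsHomogeneous n) (hb : b.IsHomogeneous n)
    (hc : c.IsHomogeneous n) (hd : d.IsHomogeneous n)
    (μ : Fin 3 → ℕ) (p : Fin 3 → (Fin 4 → MvPolynomial (Fin 3) ℂ))
    (hμle : ∀ i, μ i ≤ n)
    (hpmem : ∀ i, p i ∈ syzygyModule a b c d)
    (hphom : ∀ i j, (p i j).IsHomogeneous (μ i))
    (hpbasis : ∀ A : Fin 4 → MvPolynomial (Fin 3) ℂ, A ∈ syzygyModule a b c d →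
      ∃! h : Fin 3 → MvPolynomial (Fin 3) ℂ, A = ∑ i, h i • p i) :
    Module.finrank ℂ
        ((Ideal.span {a, b, c, d} : Ideal (MvPolynomial (Fin 3) ℂ)).restrictScalars ℂ ⊓
          homogeneousSubmodule (Fin 3) ℂ (n + k) :
          Submodule ℂ (MvPolynomial (Fin 3) ℂ)) +
      ∑ i : Fin 3, Module.finrank ℂ (homogeneousSubmodule (Fin 3) ℂ (k - μ i)) =
    4 * Module.finrank ℂ (homogeneousSubmodule (Fin 3) ℂ k) := by
  classical
  set S := fun m => homogeneousSubmodule (Fin 3) ℂ m with hS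
  have hμk : ∀ i, μ i ≤ k := fun i => le_trans (hμle i) hk
  -- the multiplication map
  set φ : (Fin 4 → S k) →ₗ[ℂ] MvPolynomial (Fin 3) ℂ :=
    { toFun := fun A => (A 0 : MvPolynomial (Fin 3) ℂ) * a + A 1 * b + A 2 * c + A 3 * d
      map_add' := by
        intro A B
        simp only [Pi.add_apply, Submodule.coe_add]
        ring
      map_smul' := by
        intro r A
        simp only [Pi.smul_apply, SetLike.val_smul, RingHom.id_apply, smul_add,
          smul_mul_assoc] } with hφ
  -- range of φ
  have hrange : LinearMap.range φ =
      (Ideal.span {a, b, c, d}).restrictScalars ℂ ⊓ S (n + k) := by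
    apply le_antisymm
    · rintro x ⟨A, rfl⟩
      constructor
      · exact mem_span_four'.2 ⟨A 0, A 1, A 2, A 3, rfl⟩
      · have hmem : ∀ (j : Fin 4) (q : MvPolynomial (Fin 3) ℂ), q.IsHomogeneous n →
            ((A j : MvPolynomial (Fin 3) ℂ) * q).IsHomogeneous (n + k) := by
          intro j q hq
          have := ((mem_homogeneousSubmodule _ _).1 (A j).2).mul hq
          simpa [Nat.add_comm] using this
        exact (((hmem 0 a ha).add (hmem 1 b hb)).add (hmem 2 c hc)).add (hmem 3 d hd)
    · rintro x ⟨hx1, hx2⟩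
      obtain ⟨A, B, C, D, rfl⟩ := mem_span_four'.1 hx1
      have hXk : ∀ X : MvPolynomial (Fin 3) ℂ, ∀ q, q.IsHomogeneous n →
          homogeneousComponent (n + k) (X * q) = homogeneousComponent k X * q := by
        intro X q hq
        rw [hc_mul' hq X (by omega), show n + k - n = k from by omega]
      have hx : homogeneousComponent (n + k) (A * a + B * b + C * c + D * d)
          = A * a + B * b + C * c + D * d :=
        by rw [homogeneousComponent_of_mem hx2]; simp
      rw [map_add, map_add, map_add, hXk A a ha, hXk B b hb, hXk C c hc, hXk D d hd] at hx
      refine ⟨![⟨homogeneousComponent k A, homogeneousComponent_mem _ _⟩,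
        ⟨homogeneousComponent k B, homogeneousComponent_mem _ _⟩,
        ⟨homogeneousComponent k C, homogeneousComponent_mem _ _⟩,
        ⟨homogeneousComponent k D, homogeneousComponent_mem _ _⟩], ?_⟩
      simp only [hφ, LinearMap.coe_mk, AddHom.coe_mk]
      simpa using hx
  -- the kernel parametrization
  have hsyz : ∀ i, p i 0 * a + p i 1 * b + p i 2 * c + p i 3 * d = 0 := fun i => hpmem i
  set ψ : (∀ i : Fin 3, S (k - μ i)) →ₗ[ℂ] (Fin 4 → S k) :=
    { toFun := fun h => fun j => ⟨∑ i : Fin 3, (h i : MvPolynomial (Fin 3) ℂ) * p i j, by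
        apply Submodule.sum_mem
        intro i _
        have := ((mem_homogeneousSubmodule _ _).1 (h i).2).mul (hphom i j)
        rw [mem_homogeneousSubmodule]
        have hki : k - μ i + μ i = k := Nat.sub_add_cancel (hμk i)
        rwa [hki] at this⟩
      map_add' := by
        intro g h
        funext j
        apply Subtype.ext
        simp only [Pi.add_apply, Submodule.coe_add, add_mul, Finset.sum_add_distrib]
      map_smul' := by
        intro r h
        funext j
        apply Subtype.ext
        simp only [Pi.smul_apply, SetLike.val_smul, RingHom.id_apply, smul_mul_assoc,
          Finset.smul_sum] } with hψ
  have hψcoe : ∀ (h : ∀ i : Fin 3, S (k - μ i)) (j : Fin 4),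
      ((ψ h j : MvPolynomial (Fin 3) ℂ)) = ∑ i : Fin 3, (h i : MvPolynomial (Fin 3) ℂ) * p i j :=
    fun h j => rfl
  have hker : LinearMap.range ψ = LinearMap.ker φ := by
    apply le_antisymm
    · rintro A ⟨h, rfl⟩
      rw [LinearMap.mem_ker]
      show (ψ h 0 : MvPolynomial (Fin 3) ℂ) * a + ψ h 1 * b + ψ h 2 * c + ψ h 3 * d = 0
      simp only [hψcoe, Finset.sum_mul, ← Finset.sum_add_distrib]
      apply Finset.sum_eq_zero
      intro i _
      have := hsyz i
      linear_combination (h i : MvPolynomial (Fin 3) ℂ) * this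
    · intro A hA
      rw [LinearMap.mem_ker] at hA
      have hAsyz : (fun j => (A j : MvPolynomial (Fin 3) ℂ)) ∈ syzygyModule a b c d := hA
      obtain ⟨h, hrep, huniq⟩ := hpbasis _ hAsyz
      have hrep' : ∀ j : Fin 4, (A j : MvPolynomial (Fin 3) ℂ) = ∑ i : Fin 3, h i * p i j := by
        intro j
        have := congrFun hrep j
        simpa using this
      have hcomp : ∀ j : Fin 4, (A j : MvPolynomial (Fin 3) ℂ)
          = ∑ i : Fin 3, homogeneousComponent (k - μ i) (h i) * p i j := by
        intro j
        have h1 : homogeneousComponent k (A j : MvPolynomial (Fin 3) ℂ)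
            = (A j : MvPolynomial (Fin 3) ℂ) := by
          rw [homogeneousComponent_of_mem (A j).2]; simp
        conv_lhs => rw [← h1, hrep' j, map_sum]
        exact Finset.sum_congr rfl fun i _ => hc_mul' (hphom i j) (h i) (hμk i)
      have hh : (fun i => homogeneousComponent (k - μ i) (h i)) = h := by
        apply huniq
        funext j
        simp only [Finset.sum_apply, Pi.smul_apply, smul_eq_mul]
        exact hcomp j
      refine ⟨fun i => ⟨homogeneousComponent (k - μ i) (h i), homogeneousComponent_mem _ _⟩, ?_⟩
      funext j
      apply Subtype.ext
      rw [hψcoe]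
      exact (hcomp j).symm
  have hinj : Function.Injective ψ := by
    rw [← LinearMap.ker_eq_bot]
    apply (Submodule.eq_bot_iff _).2
    intro h hh
    rw [LinearMap.mem_ker] at hh
    have hz : ∀ j : Fin 4, ∑ i : Fin 3, (h i : MvPolynomial (Fin 3) ℂ) * p i j = 0 := by
      intro j
      rw [← hψcoe h j, hh]
      rfl
    obtain ⟨g, hgrep, hguniq⟩ := hpbasis 0 (Submodule.zero_mem _)
    have h1 : (fun i => (h i : MvPolynomial (Fin 3) ℂ)) = g := by
      apply hguniq
      funext j
      simp only [Finset.sum_apply, Pi.smul_apply, smul_eq_mul, Pi.zero_apply]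
      exact (hz j).symm
    have h2 : (0 : Fin 3 → MvPolynomial (Fin 3) ℂ) = g := by
      apply hguniq
      simp
    funext i
    apply Subtype.ext
    have := congrFun (h1.trans h2.symm) i
    simpa using this
  -- rank counting
  have e1 : Module.finrank ℂ (LinearMap.range φ) + Module.finrank ℂ (LinearMap.ker φ)
      = Module.finrank ℂ (Fin 4 → S k) := LinearMap.finrank_range_add_finrank_ker φ
  have e2 : Module.finrank ℂ (LinearMap.ker φ)
      = ∑ i : Fin 3, Module.finrank ℂ (S (k - μ i)) := by
    rw [← hker, LinearMap.finrank_range_of_inj hinj, Module.finrank_pi_fintype]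
  have e3 : Module.finrank ℂ (Fin 4 → S k) = 4 * Module.finrank ℂ (S k) := by
    rw [Module.finrank_pi_fintype]
    simp [Finset.sum_const]
  rw [hrange] at e1
  rw [e2, e3] at e1
  exact e1

/-! ### Arithmetic lemmas -/

lemma two_dvd_prod (m : ℕ) : 2 ∣ (m+1)*(m+2) := by
  have := Nat.even_mul_succ_self (m+1)
  exact this.two_dvd

lemma two_dvd_sq (n μ0 μ1 μ2 : ℕ) (hs : μ0 + μ1 + μ2 = n) :
    2 ∣ n^2 + μ0^2 + μ1^2 + μ2^2 := by
  have h0 : 2 ∣ n^2 + n := by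
    have := (Nat.even_mul_succ_self n).two_dvd
    have e : n * (n+1) = n^2 + n := by ring
    rwa [e] at this
  have h1 : 2 ∣ μ0^2 + μ0 := by
    have := (Nat.even_mul_succ_self μ0).two_dvd
    have e : μ0 * (μ0+1) = μ0^2 + μ0 := by ring
    rwa [e] at this
  have h2 : 2 ∣ μ1^2 + μ1 := by
    have := (Nat.even_mul_succ_self μ1).two_dvd
    have e : μ1 * (μ1+1) = μ1^2 + μ1 := by ring
    rwa [e] at this
  have h3 : 2 ∣ μ2^2 + μ2 := by
    have := (Nat.even_mul_succ_self μ2).two_dvd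
    have e : μ2 * (μ2+1) = μ2^2 + μ2 := by ring
    rwa [e] at this
  generalize n^2 = N at h0 ⊢
  generalize μ0^2 = M0 at h1 ⊢
  generalize μ1^2 = M1 at h2 ⊢
  generalize μ2^2 = M2 at h3 ⊢
  omega

lemma arith_key (n k μ0 μ1 μ2 : ℕ) (hs : μ0 + μ1 + μ2 = n) (h0 : μ0 ≤ k) (h1 : μ1 ≤ k)
    (h2 : μ2 ≤ k) :
    (n+k+1)*(n+k+2) + ((k-μ0+1)*(k-μ0+2) + (k-μ1+1)*(k-μ1+2) + (k-μ2+1)*(k-μ2+2))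
      = 4*((k+1)*(k+2)) + (n^2 + μ0^2 + μ1^2 + μ2^2) := by
  have hsz : (μ0:ℤ) + μ1 + μ2 = n := by exact_mod_cast hs
  zify [h0, h1, h2]
  linear_combination (-(2*(k:ℤ)+3)) * hsz

lemma arith_final (n k μ0 μ1 μ2 q : ℕ) (hs : μ0 + μ1 + μ2 = n) (h0 : μ0 ≤ k) (h1 : μ1 ≤ k)
    (h2 : μ2 ≤ k)
    (hq : q + ((k-μ0+1)*(k-μ0+2)/2 + (k-μ1+1)*(k-μ1+2)/2 + (k-μ2+1)*(k-μ2+2)/2)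
      = 4*((k+1)*(k+2)/2)) :
    (n+k+1)*(n+k+2)/2 - q = (n^2 + μ0^2 + μ1^2 + μ2^2)/2 := by
  have key := arith_key n k μ0 μ1 μ2 hs h0 h1 h2
  have dA : 2 * ((n+k+1)*(n+k+2)/2) = (n+k+1)*(n+k+2) := Nat.mul_div_cancel' (two_dvd_prod _)
  have d0 : 2 * ((k-μ0+1)*(k-μ0+2)/2) = (k-μ0+1)*(k-μ0+2) := Nat.mul_div_cancel' (two_dvd_prod _)
  have d1 : 2 * ((k-μ1+1)*(k-μ1+2)/2) = (k-μ1+1)*(k-μ1+2) := Nat.mul_div_cancel' (two_dvd_prod _)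
  have d2 : 2 * ((k-μ2+1)*(k-μ2+2)/2) = (k-μ2+1)*(k-μ2+2) := Nat.mul_div_cancel' (two_dvd_prod _)
  have dB : 2 * ((k+1)*(k+2)/2) = (k+1)*(k+2) := Nat.mul_div_cancel' (two_dvd_prod _)
  have dG : 2 * ((n^2 + μ0^2 + μ1^2 + μ2^2)/2) = n^2 + μ0^2 + μ1^2 + μ2^2 :=
    Nat.mul_div_cancel' (two_dvd_sq n μ0 μ1 μ2 hs)
  rw [← dA, ← d0, ← d1, ← d2, ← dB, ← dG] at key
  generalize (n+k+1)*(n+k+2)/2 = A at key ⊢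
  generalize (k-μ0+1)*(k-μ0+2)/2 = C0 at key hq ⊢
  generalize (k-μ1+1)*(k-μ1+2)/2 = C1 at key hq ⊢
  generalize (k-μ2+1)*(k-μ2+2)/2 = C2 at key hq ⊢
  generalize (k+1)*(k+2)/2 = B at key hq ⊢
  generalize (n^2 + μ0^2 + μ1^2 + μ2^2)/2 = G at key ⊢
  omega

/-- If `Syz(a,b,c,d)` is free with a basis of homogeneous syzygies
of degrees `μ₁, μ₂, μ₃` (so `μ₁ + μ₂ + μ₃ = n`), then for all sufficiently large `d`
the dimension of the degree-`d` graded piece of `R/I` (computed as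
`dim R_d − dim I_d`) equals `(n² + μ₁² + μ₂² + μ₃²)/2`. -/
theorem strong_mu_basis_hilbert_function (n : ℕ) (hn : 1 ≤ n)
    (a b c d : MvPolynomial (Fin 3) ℂ)
    (ha : a.IsHomogeneous n) (hb : b.IsHomogeneous n)
    (hc : c.IsHomogeneous n) (hd : d.IsHomogeneous n)
    (hgcd : ∀ g : MvPolynomial (Fin 3) ℂ, g ∣ a → g ∣ b → g ∣ c → g ∣ d → IsUnit g)
    (μ : Fin 3 → ℕ) (p : Fin 3 → (Fin 4 → MvPolynomial (Fin 3) ℂ))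
    (hμsum : μ 0 + μ 1 + μ 2 = n)
    (hpmem : ∀ i, p i ∈ syzygyModule a b c d)
    (hphom : ∀ i j, (p i j).IsHomogeneous (μ i))
    (hpbasis : ∀ A : Fin 4 → MvPolynomial (Fin 3) ℂ, A ∈ syzygyModule a b c d →
      ∃! h : Fin 3 → MvPolynomial (Fin 3) ℂ, A = ∑ i, h i • p i) :
    ∃ D : ℕ, ∀ d' : ℕ, D ≤ d' →
      Module.finrank ℂ (homogeneousSubmodule (Fin 3) ℂ d') -
        Module.finrank ℂ
          ((Ideal.span {a, b, c, d} : Ideal (MvPolynomial (Fin 3) ℂ)).restrictScalars ℂ ⊓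
            homogeneousSubmodule (Fin 3) ℂ d' :
            Submodule ℂ (MvPolynomial (Fin 3) ℂ)) =
      (n ^ 2 + (μ 0) ^ 2 + (μ 1) ^ 2 + (μ 2) ^ 2) / 2 := by
  refine ⟨2 * n, fun d' hd' => ?_⟩
  obtain ⟨k, hk, rfl⟩ : ∃ k, n ≤ k ∧ d' = n + k := ⟨d' - n, by omega, by omega⟩
  have hμle : ∀ i : Fin 3, μ i ≤ n := by
    have h0 : μ 0 ≤ n := by omega
    have h1 : μ 1 ≤ n := by omega
    have h2 : μ 2 ≤ n := by omega
    intro i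
    fin_cases i <;> assumption
  have hq := dim_inf n k hk a b c d ha hb hc hd μ p hμle hpmem hphom hpbasis
  rw [Fin.sum_univ_three, finrank_S, finrank_S, finrank_S, finrank_S] at hq
  rw [finrank_S]
  exact arith_final n k (μ 0) (μ 1) (μ 2) _ hμsum (le_trans (hμle 0) hk)
    (le_trans (hμle 1) hk) (le_trans (hμle 2) hk) hq
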